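/- Let N ≥ 2 and 1 ≤ K < N be integers. For every probability distribution p on B_K such that the information matrix M(p) is invertible, trace(M(p)⁻¹) ≥ N/K + N·(N−1)²/(N−K), and the uniform distribution on B_K attains this bound; that is, the uniform distribution minimizes trace(M(p)⁻¹) over all distributions on B_K. -/

import Mathlib

/-!
For a positive semidefinite invertible `M` and a symmetric `B`, expanding
`0 ≤ tr ((1 - M B)ᵀ M⁻¹ (1 - M B))` gives `tr M⁻¹ ≥ 2 tr B - tr (M B²)`.
By the symmetry of `B_K` under permutations of coordinates, the information matrix `U` of the
uniform design is `a I + b J` with `J` the all-ones matrix, so `B = U⁻¹` and `B²` lie in the span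
of `I` and `J` too. For every design on `B_K` we have `tr M = 1` and `tr (M J) = 1ᵀ M 1 = K`,
hence `tr (M B²) = tr (U B²) = tr B`, and the inequality becomes `tr M⁻¹ ≥ tr U⁻¹`.
-/

/-- `BK N K` is the set of binary vectors in `ℝ^N` with exactly `K` entries
equal to `1`. -/
noncomputable def BK (N K : ℕ) : Finset (Fin N → ℝ) :=
  (Finset.univ.powersetCard K : Finset (Finset (Fin N))).image
    (fun s => fun i => if i ∈ s then (1 : ℝ) else 0)

/-- The information matrix `M(p) = ∑_{x ∈ X} (p(x)/(xᵀx)) · x·xᵀ`. -/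
noncomputable def infoMatrix {N : ℕ} (X : Finset (Fin N → ℝ)) (p : (Fin N → ℝ) → ℝ) :
    Matrix (Fin N) (Fin N) ℝ :=
  ∑ x ∈ X, (p x / ∑ i, x i ^ 2) • Matrix.vecMulVec x x

open Finset Matrix

namespace Matrix

variable {n R : Type*} [Fintype n]

theorem of_one_mul_of_one [NonAssocSemiring R] :
    (of 1 : Matrix n n R) * of 1 = (Fintype.card n : R) • of 1 := by
  ext i j
  simp [mul_apply]

variable [DecidableEq n]

theorem smul_one_add_smul_of_one_mul [CommSemiring R] (a b c d : R) :
    (a • 1 + b • of 1 : Matrix n n R) * (c • 1 + d • of 1)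
      = (a * c) • 1 + (a * d + b * c + Fintype.card n * b * d) • of 1 := by
  simp only [add_mul, mul_add, smul_mul_smul_comm, one_mul, mul_one, of_one_mul_of_one, smul_smul]
  module

theorem trace_smul_one_add_smul_of_one [CommSemiring R] (a b : R) :
    (a • 1 + b • of 1 : Matrix n n R).trace = Fintype.card n * (a + b) := by
  simp [trace, mul_add]

theorem PosSemidef.trace_le_trace_inv [CommRing R] [PartialOrder R] [StarRing R]
    [IsOrderedAddMonoid R] {M B : Matrix n n R} (hM : M.PosSemidef) (hMu : IsUnit M)
    (hB : B.IsHermitian) (hMB : (M * (B * B)).trace = B.trace) : B.trace ≤ M⁻¹.trace := by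
  have hdet : IsUnit M.det := (isUnit_iff_isUnit_det M).mp hMu
  have hsq : 0 ≤ ((1 - M * B)ᴴ * M⁻¹ * (1 - M * B)).trace :=
    (hM.inv.conjTranspose_mul_mul_same _).trace_nonneg
  have hexpand : (1 - M * B)ᴴ * M⁻¹ * (1 - M * B) = M⁻¹ - B - B + B * (M * B) := by
    rw [conjTranspose_sub, conjTranspose_one, conjTranspose_mul, hB.eq, hM.isHermitian.eq]
    simp only [sub_mul, mul_sub, one_mul, mul_one, Matrix.mul_assoc, mul_nonsing_inv _ hdet,
      nonsing_inv_mul_cancel_left _ _ hdet]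
    abel
  rw [hexpand, trace_add, trace_sub, trace_sub, trace_mul_comm B, Matrix.mul_assoc, hMB] at hsq
  simpa using hsq

end Matrix

namespace Finset

variable {α : Type*} [Fintype α]

theorem card_powersetCard_filter_map_perm (K : ℕ) (σ : Equiv.Perm α) (P : Finset α → Prop)
    [DecidablePred P] :
    #{s ∈ powersetCard K univ | P (s.map σ.toEmbedding)} = #{s ∈ powersetCard K univ | P s} := by
  refine card_nbij' (·.map σ.toEmbedding) (·.map σ.symm.toEmbedding) ?_ ?_ ?_ ?_ <;>
    intro s hs <;> simp_all [map_map]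

variable [DecidableEq α]

theorem card_powersetCard_filter_mem_eq (K : ℕ) (i j : α) :
    #{s ∈ powersetCard K univ | i ∈ s} = #{s ∈ powersetCard K univ | j ∈ s} := by
  rw [← card_powersetCard_filter_map_perm K (Equiv.swap i j)]
  simp

theorem card_powersetCard_filter_pair_eq (K : ℕ) {i j k l : α} (hij : i ≠ j) (hkl : k ≠ l) :
    #{s ∈ powersetCard K univ | i ∈ s ∧ j ∈ s} = #{s ∈ powersetCard K univ | k ∈ s ∧ l ∈ s} := by
  obtain ⟨σ, rfl, rfl⟩ := MulAction.is_two_pretransitive_iff.mp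
    (Equiv.Perm.isMultiplyPretransitive α 2) hij hkl
  rw [← card_powersetCard_filter_map_perm K σ fun s => σ • i ∈ s ∧ σ • j ∈ s]
  simp

theorem card_mul_card_powersetCard_filter_mem (K : ℕ) (i : α) :
    Fintype.card α * #{s ∈ powersetCard K univ | i ∈ s} = K * (Fintype.card α).choose K := by
  rw [← sum_card fun a => card_powersetCard_filter_mem_eq K a i, sum_const_nat
    fun s hs => mem_powersetCard_univ.mp hs, card_powersetCard, card_univ, mul_comm]

theorem card_sub_one_mul_card_powersetCard_filter_pair (K : ℕ) {i j : α} (hij : i ≠ j) :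
    (Fintype.card α - 1) * #{s ∈ powersetCard K univ | i ∈ s ∧ j ∈ s}
      = (K - 1) * #{s ∈ powersetCard K univ | i ∈ s} := by
  have hcount : ∀ a ∈ univ.erase i, #{t ∈ {s ∈ powersetCard K univ | i ∈ s} | a ∈ t}
      = #{s ∈ powersetCard K univ | i ∈ s ∧ j ∈ s} := by
    intro a ha
    rw [filter_filter, card_powersetCard_filter_pair_eq K (ne_of_mem_erase ha).symm hij]
  have hsum := sum_card_inter hcount
  rw [card_erase_of_mem (mem_univ i), card_univ] at hsum
  rw [← hsum, sum_const_nat, mul_comm]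
  intro t ht
  rw [mem_filter, mem_powersetCard_univ] at ht
  rw [erase_inter, univ_inter, card_erase_of_mem ht.2, ht.1]

end Finset

theorem infoMatrix_posSemidef {N : ℕ} {X : Finset (Fin N → ℝ)} {p : (Fin N → ℝ) → ℝ}
    (hp : ∀ x ∈ X, 0 ≤ p x) : (infoMatrix X p).PosSemidef :=
  posSemidef_sum X fun x hx => by
    simpa using (posSemidef_vecMulVec_self_star x).smul
      (div_nonneg (hp x hx) (sum_nonneg fun i _ => sq_nonneg (x i)))

theorem trace_infoMatrix_mul {N : ℕ} (X : Finset (Fin N → ℝ)) (p : (Fin N → ℝ) → ℝ)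
    (A : Matrix (Fin N) (Fin N) ℝ) :
    (infoMatrix X p * A).trace = ∑ x ∈ X, p x / (∑ i, x i ^ 2) * (x ⬝ᵥ (x ᵥ* A)) := by
  simp [infoMatrix, sum_mul, trace_sum, vecMulVec_mul]

def indicatorVec (α R : Type*) [DecidableEq α] [Zero R] [One R] [NeZero (1 : R)] :
    Finset α ↪ (α → R) where
  toFun s i := if i ∈ s then 1 else 0
  inj' s t h := by
    ext i
    have := congrFun h i
    by_cases hs : i ∈ s <;> by_cases ht : i ∈ t <;> simp_all

section indicatorVec

variable {α R : Type*} [DecidableEq α] [CommSemiring R] [NeZero (1 : R)]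

@[simp]
theorem indicatorVec_apply (s : Finset α) (i : α) :
    indicatorVec α R s i = if i ∈ s then 1 else 0 :=
  rfl

variable [Fintype α]

theorem sum_indicatorVec_sq (s : Finset α) : ∑ i, indicatorVec α R s i ^ 2 = #s := by
  simp

theorem indicatorVec_dotProduct_vecMul_smul_one_add_smul_of_one (s : Finset α) (c d : R) :
    indicatorVec α R s ⬝ᵥ (indicatorVec α R s ᵥ* (c • 1 + d • of 1)) = c * #s + d * #s ^ 2 := by
  simp [dotProduct, vecMul, one_apply, sum_add_distrib, sq]
  ring

end indicatorVec

theorem BK_eq_map (N K : ℕ) : BK N K = (powersetCard K univ).map (indicatorVec (Fin N) ℝ) := by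
  rw [map_eq_image]
  rfl

theorem trace_infoMatrix_BK_mul {N K : ℕ} (hK : 0 < K) (p : (Fin N → ℝ) → ℝ) (c d : ℝ) :
    (infoMatrix (BK N K) p * (c • 1 + d • of 1)).trace = (c + d * K) * ∑ x ∈ BK N K, p x := by
  rw [trace_infoMatrix_mul, BK_eq_map, sum_map, sum_map, mul_sum]
  refine sum_congr rfl fun s hs => ?_
  rw [mem_powersetCard_univ] at hs
  rw [sum_indicatorVec_sq, indicatorVec_dotProduct_vecMul_smul_one_add_smul_of_one, hs]
  field_simp

theorem infoMatrix_BK_const_apply {N K : ℕ} (c : ℝ) (i j : Fin N) :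
    infoMatrix (BK N K) (fun _ => c) i j = c / K * #{s ∈ powersetCard K univ | i ∈ s ∧ j ∈ s} := by
  simp only [infoMatrix, BK_eq_map, sum_map, Matrix.sum_apply, Matrix.smul_apply,
    vecMulVec_apply, natCast_card_filter, mul_sum]
  refine sum_congr rfl fun s hs => ?_
  rw [sum_indicatorVec_sq, mem_powersetCard_univ.mp hs]
  by_cases hi : i ∈ s <;> by_cases hj : j ∈ s <;> simp [hi, hj]

theorem infoMatrix_BK_uniform {N K : ℕ} (hK : 0 < K) (hKN : K < N) :
    infoMatrix (BK N K) (fun _ => (N.choose K : ℝ)⁻¹)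
      = (((N : ℝ) - K) / (N * (N - 1))) • 1 + (((K : ℝ) - 1) / (N * (N - 1))) • of 1 := by
  have hC : ((N.choose K : ℕ) : ℝ) ≠ 0 := by exact_mod_cast (Nat.choose_pos hKN.le).ne'
  have hN1 : (N : ℝ) - 1 ≠ 0 := by
    rw [sub_ne_zero]; exact_mod_cast (by omega : N ≠ 1)
  have hK0 : (K : ℝ) ≠ 0 := by exact_mod_cast hK.ne'
  have hN0 : (N : ℝ) ≠ 0 := by exact_mod_cast (by omega : N ≠ 0)
  ext i j
  have hdiag : (N : ℝ) * #{s ∈ powersetCard K univ | i ∈ s} = K * N.choose K := by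
    exact_mod_cast Fintype.card_fin N ▸ card_mul_card_powersetCard_filter_mem K i
  simp only [infoMatrix_BK_const_apply, Matrix.add_apply, Matrix.smul_apply, one_apply,
    of_apply, Pi.one_apply]
  rcases eq_or_ne i j with rfl | hij
  · simp only [and_self, if_true, smul_eq_mul, mul_one]
    field_simp
    linear_combination ((N : ℝ) - 1) * hdiag
  · have hrow : ((N : ℝ) - 1) * #{s ∈ powersetCard K univ | i ∈ s ∧ j ∈ s}
        = ((K : ℝ) - 1) * #{s ∈ powersetCard K univ | i ∈ s} := by
      rw [← Nat.cast_one, ← Nat.cast_sub (by omega : 1 ≤ N), ← Nat.cast_sub hK]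
      exact_mod_cast Fintype.card_fin N ▸ card_sub_one_mul_card_powersetCard_filter_pair K hij
    simp only [hij, if_false, smul_eq_mul, mul_zero, mul_one, zero_add]
    field_simp
    linear_combination (N : ℝ) * hrow + ((K : ℝ) - 1) * hdiag

theorem sum_BK_inv_choose {N K : ℕ} (hKN : K ≤ N) : ∑ _x ∈ BK N K, (N.choose K : ℝ)⁻¹ = 1 := by
  rw [sum_const, BK_eq_map, card_map, card_powersetCard, card_univ, Fintype.card_fin, nsmul_eq_mul,
    mul_inv_cancel₀ (by exact_mod_cast (Nat.choose_pos hKN).ne')]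

theorem infoMatrix_BK_uniform_mul_eq_one {N K : ℕ} (hK : 0 < K) (hKN : K < N) :
    infoMatrix (BK N K) (fun _ => (N.choose K : ℝ)⁻¹)
      * (((N : ℝ) * (N - 1) / (N - K)) • 1 + (-(N : ℝ) * (K - 1) / (K * (N - K))) • of 1) = 1 := by
  have hK0 : (K : ℝ) ≠ 0 := by exact_mod_cast hK.ne'
  have hN0 : (N : ℝ) ≠ 0 := by exact_mod_cast (by omega : N ≠ 0)
  have hN1 : (N : ℝ) - 1 ≠ 0 := by rw [sub_ne_zero]; exact_mod_cast (by omega : N ≠ 1)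
  have hNK : (N : ℝ) - K ≠ 0 := by rw [sub_ne_zero]; exact_mod_cast hKN.ne'
  have hdiag : (N - K) / (N * (N - 1)) * ((N : ℝ) * (N - 1) / (N - K)) = 1 := by
    field_simp
  have hoff : (N - K) / (N * (N - 1)) * (-(N : ℝ) * (K - 1) / (K * (N - K)))
      + (K - 1) / (N * (N - 1)) * (N * (N - 1) / (N - K))
      + N * ((K - 1) / (N * (N - 1))) * (-N * (K - 1) / (K * (N - K))) = 0 := by
    field_simp
    ring
  rw [infoMatrix_BK_uniform hK hKN, smul_one_add_smul_of_one_mul, Fintype.card_fin, hdiag, hoff,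
    one_smul, zero_smul, add_zero]

theorem uniform_optimal_on_BK_general (N K : ℕ) (hK1 : 1 ≤ K) (hKN : K < N) :
    (∀ p : (Fin N → ℝ) → ℝ, (∀ x ∈ BK N K, 0 ≤ p x) → (∑ x ∈ BK N K, p x) = 1 →
      IsUnit (infoMatrix (BK N K) p) →
      (N : ℝ) / K + N * ((N : ℝ) - 1) ^ 2 / ((N : ℝ) - K)
        ≤ (infoMatrix (BK N K) p)⁻¹.trace) ∧
    (infoMatrix (BK N K) (fun _ => (N.choose K : ℝ)⁻¹))⁻¹.trace
      = (N : ℝ) / K + N * ((N : ℝ) - 1) ^ 2 / ((N : ℝ) - K) := by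
  set U := infoMatrix (BK N K) (fun _ => (N.choose K : ℝ)⁻¹) with hU
  set B : Matrix (Fin N) (Fin N) ℝ :=
    ((N : ℝ) * (N - 1) / (N - K)) • 1 + (-(N : ℝ) * (K - 1) / (K * (N - K))) • of 1 with hB
  have hUB : U * B = 1 := infoMatrix_BK_uniform_mul_eq_one hK1 hKN
  have hUinv : U⁻¹ = B := inv_eq_right_inv hUB
  have hBtr : B.trace = (N : ℝ) / K + N * ((N : ℝ) - 1) ^ 2 / ((N : ℝ) - K) := by
    have hK0 : (K : ℝ) ≠ 0 := by exact_mod_cast (by omega : K ≠ 0)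
    have hNK : (N : ℝ) - K ≠ 0 := by rw [sub_ne_zero]; exact_mod_cast hKN.ne'
    rw [hB, trace_smul_one_add_smul_of_one, Fintype.card_fin]
    field_simp
    ring
  have hMBB : ∀ p : (Fin N → ℝ) → ℝ, ∑ x ∈ BK N K, p x = 1 →
      (infoMatrix (BK N K) p * (B * B)).trace = B.trace := by
    intro p hp
    calc _ = (U * (B * B)).trace := by
          simp only [hB, smul_one_add_smul_of_one_mul, trace_infoMatrix_BK_mul hK1, hp, hU,
            sum_BK_inv_choose hKN.le]
      _ = B.trace := by rw [← Matrix.mul_assoc, hUB, Matrix.one_mul]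
  refine ⟨fun p hp hsum hunit => hBtr ▸ ?_, hUinv ▸ hBtr⟩
  exact (infoMatrix_posSemidef hp).trace_le_trace_inv hunit
    (hUinv ▸ (infoMatrix_posSemidef fun _ _ => by positivity).inv.isHermitian) (hMBB p hsum)

/-- every probability distribution `p` on `B_K` with invertible
information matrix satisfies `trace(M(p)⁻¹) ≥ N/K + N(N-1)²/(N-K)`, and the
uniform distribution attains this bound. -/
theorem uniform_optimal_on_BK (N K : ℕ) (hN : 2 ≤ N) (hK1 : 1 ≤ K) (hKN : K < N) :
    (∀ p : (Fin N → ℝ) → ℝ, (∀ x ∈ BK N K, 0 ≤ p x) → (∑ x ∈ BK N K, p x) = 1 →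
      IsUnit (infoMatrix (BK N K) p) →
      (N : ℝ) / K + N * ((N : ℝ) - 1) ^ 2 / ((N : ℝ) - K)
        ≤ (infoMatrix (BK N K) p)⁻¹.trace) ∧
    (infoMatrix (BK N K) (fun _ => (N.choose K : ℝ)⁻¹))⁻¹.trace
      = (N : ℝ) / K + N * ((N : ℝ) - 1) ^ 2 / ((N : ℝ) - K) :=
  uniform_optimal_on_BK_general N K hK1 hKN
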